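/- Let Ω be a commutative semigroup and (A, (*_{α,β})) a commutative Ω-associative algebra over a field of characteristic zero. Suppose T⁽¹⁾ and T⁽²⁾ are families of bilinear maps on A indexed by Ω² such that, writing (T∘̂S)(x,y,z)_{α,β,γ} := T_{α,βγ}(x, S_{β,γ}(y,z)) − T_{αβ,γ}(S_{α,β}(x,y), z) and T⁽⁰⁾_{α,β}(x,y) := x *_{α,β} y, the deformation equation T⁽⁰⁾∘̂T⁽²⁾ + T⁽¹⁾∘̂T⁽¹⁾ + T⁽²⁾∘̂T⁽⁰⁾ = 0 holds. Define [x,y]_{α,β} := T⁽¹⁾_{α,β}(x,y) − T⁽¹⁾_{β,α}(y,x). Then [·,·] satisfies the Ω-Jacobi identity [[x,y]_{α,β}, z]_{αβ,γ} = [x,[y,z]_{β,γ}]_{α,βγ} − [y,[x,z]_{α,γ}]_{β,αγ} for all x,y,z∈A and α,β,γ∈Ω. -/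
import Mathlib


/-- `(T∘̂S)(x,y,z)_{α,β,γ} := T_{α,βγ}(x, S_{β,γ}(y,z)) − T_{αβ,γ}(S_{α,β}(x,y), z)`. -/
def hatComp {k Ω A : Type*} [Field k] [Mul Ω] [AddCommGroup A] [Module k A]
    (T S : Ω → Ω → A →ₗ[k] A →ₗ[k] A) (α β γ : Ω) (x y z : A) : A :=
  T α (β * γ) x (S β γ y z) - T (α * β) γ (S α β x y) z

/-- The bracket `[x,y]_{α,β} := T¹_{α,β}(x,y) − T¹_{β,α}(y,x)`. -/
def defBracket {k Ω A : Type*} [Field k] [AddCommGroup A] [Module k A]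
    (T1 : Ω → Ω → A →ₗ[k] A →ₗ[k] A) (α β : Ω) (x y : A) : A :=
  T1 α β x y - T1 β α y x

/-- If `T⁰∘̂T² + T¹∘̂T¹ + T²∘̂T⁰ = 0` over a commutative
Ω-associative algebra (with `T⁰ = *`), then the bracket
`[x,y]_{α,β} = T¹_{α,β}(x,y) − T¹_{β,α}(y,x)` satisfies the Ω-Jacobi identity. -/
theorem deformation_bracket_jacobi
    {k Ω A : Type*} [Field k] [CharZero k] [CommSemigroup Ω]
    [AddCommGroup A] [Module k A]
    (star : Ω → Ω → A →ₗ[k] A →ₗ[k] A)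
    (hassoc : ∀ (α β γ : Ω) (x y z : A),
      star (α * β) γ (star α β x y) z = star α (β * γ) x (star β γ y z))
    (hcomm : ∀ (α β : Ω) (x y : A), star α β x y = star β α y x)
    (T1 T2 : Ω → Ω → A →ₗ[k] A →ₗ[k] A)
    (hdef : ∀ (α β γ : Ω) (x y z : A),
      hatComp star T2 α β γ x y z + hatComp T1 T1 α β γ x y z
        + hatComp T2 star α β γ x y z = 0) :
    ∀ (α β γ : Ω) (x y z : A),
      defBracket T1 (α * β) γ (defBracket T1 α β x y) z
        = defBracket T1 α (β * γ) x (defBracket T1 β γ y z)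
          - defBracket T1 β (α * γ) y (defBracket T1 α γ x z) := by
  intro α β γ x y z
  have E1 := hdef α β γ x y z
  have E2 := hdef β α γ y x z
  have E3 := hdef γ α β z x y
  have E4 := hdef γ β α z y x
  have E5 := hdef α γ β x z y
  have E6 := hdef β γ α y z x
  simp only [hatComp] at E1 E2 E3 E4 E5 E6
  simp only [mul_comm β α, mul_comm γ α, mul_comm γ β] at E2 E3 E4 E5 E6
  simp only [defBracket, map_sub, LinearMap.sub_apply]
  linear_combination (norm := module) (-1 : k) • E1 + E2 - E3 + E4 + E5 - E6
    + hcomm α (β * γ) x (T2 β γ y z)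
    - hcomm α (β * γ) x (T2 γ β z y)
    - hcomm (α * β) γ (T2 α β x y) z
    + hcomm (α * β) γ (T2 β α y x) z
    + hcomm (α * γ) β (T2 α γ x z) y
    - hcomm (α * γ) β (T2 γ α z x) y
    + congrArg (T2 α (β * γ) x) (hcomm β γ y z)
    - congrArg (fun t => T2 (α * β) γ t z) (hcomm α β x y)
    + congrArg (fun t => T2 (α * γ) β t y) (hcomm α γ x z)
    - congrArg (T2 β (α * γ) y) (hcomm α γ x z)
    - congrArg (fun t => T2 (β * γ) α t x) (hcomm β γ y z)
    + congrArg (T2 γ (α * β) z) (hcomm α β x y)
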